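/- If u(x,y) = e^{a·v(x,y)} for all (x,y) ∈ ℝ², where a ∈ ℝ is a constant, then the two-dimensional differential transforms satisfy: U(0,0) = e^{a·v(0,0)}; for m ≥ 1 and any n ∈ ℕ, U(m,n) = a · Σ_{k=0}^{m−1} Σ_{l=0}^{n} ((m−k)/m) · V(m−k, l) · U(k, n−l); and for n ≥ 1 and any m ∈ ℕ, U(m,n) = a · Σ_{k=0}^{m} Σ_{l=0}^{n−1} ((n−l)/n) · V(k, n−l) · U(m−k, l). -/

import Mathlib

open Real

/-- Two-dimensional differential transform of `u` at the origin:
`U(m,n) = (1/(m!·n!)) · (∂^{m+n} u / ∂x^m ∂y^n)(0,0)`, where the mixed partial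
derivative is the `n`-th derivative in `y` of the `m`-th derivative in `x`. -/
noncomputable def diffTransform (u : ℝ → ℝ → ℝ) (m n : ℕ) : ℝ :=
  (1 / (m.factorial * n.factorial : ℝ)) *
    iteratedDeriv n (fun y => iteratedDeriv m (fun x => u x y) 0) 0

namespace DTaux

noncomputable def px (f : ℝ → ℝ → ℝ) : ℝ → ℝ → ℝ := fun x y => deriv (fun x' => f x' y) x
noncomputable def py (f : ℝ → ℝ → ℝ) : ℝ → ℝ → ℝ := fun x y => deriv (fun y' => f x y') y

def Sm (f : ℝ → ℝ → ℝ) : Prop := ContDiff ℝ (⊤ : ℕ∞) (fun p : ℝ × ℝ => f p.1 p.2)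

lemma Sm.sliceX {f : ℝ → ℝ → ℝ} (hf : Sm f) (y : ℝ) : ContDiff ℝ (⊤ : ℕ∞) (fun x => f x y) :=
  hf.comp (contDiff_id.prodMk contDiff_const)

lemma Sm.sliceY {f : ℝ → ℝ → ℝ} (hf : Sm f) (x : ℝ) : ContDiff ℝ (⊤ : ℕ∞) (fun y => f x y) :=
  hf.comp (contDiff_const.prodMk contDiff_id)

lemma hasDerivAt_sliceX {f : ℝ → ℝ → ℝ} (hf : Sm f) (x y : ℝ) :
    HasDerivAt (fun x' => f x' y) (fderiv ℝ (fun p : ℝ × ℝ => f p.1 p.2) (x, y) (1, 0)) x := by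
  have h1 : HasDerivAt (fun x' : ℝ => (x', y)) ((1 : ℝ), (0 : ℝ)) x :=
    (hasDerivAt_id x).prodMk (hasDerivAt_const x y)
  exact (hf.differentiable (by simp) (x, y)).hasFDerivAt.comp_hasDerivAt x h1

lemma hasDerivAt_sliceY {f : ℝ → ℝ → ℝ} (hf : Sm f) (x y : ℝ) :
    HasDerivAt (fun y' => f x y') (fderiv ℝ (fun p : ℝ × ℝ => f p.1 p.2) (x, y) (0, 1)) y := by
  have h1 : HasDerivAt (fun y' : ℝ => (x, y')) ((0 : ℝ), (1 : ℝ)) y :=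
    (hasDerivAt_const y x).prodMk (hasDerivAt_id y)
  exact (hf.differentiable (by simp) (x, y)).hasFDerivAt.comp_hasDerivAt y h1

lemma px_eq {f : ℝ → ℝ → ℝ} (hf : Sm f) (x y : ℝ) :
    px f x y = fderiv ℝ (fun p : ℝ × ℝ => f p.1 p.2) (x, y) (1, 0) :=
  (hasDerivAt_sliceX hf x y).deriv

lemma py_eq {f : ℝ → ℝ → ℝ} (hf : Sm f) (x y : ℝ) :
    py f x y = fderiv ℝ (fun p : ℝ × ℝ => f p.1 p.2) (x, y) (0, 1) :=
  (hasDerivAt_sliceY hf x y).deriv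

lemma smooth_fderiv_apply {f : ℝ → ℝ → ℝ} (hf : Sm f) (w : ℝ × ℝ) :
    ContDiff ℝ (⊤ : ℕ∞) (fun p : ℝ × ℝ => fderiv ℝ (fun q : ℝ × ℝ => f q.1 q.2) p w) := by
  exact (hf.fderiv_right (by simp)).clm_apply contDiff_const

lemma Sm.px {f : ℝ → ℝ → ℝ} (hf : Sm f) : Sm (DTaux.px f) := by
  have hfe : (fun p : ℝ × ℝ => DTaux.px f p.1 p.2)
      = fun p : ℝ × ℝ => fderiv ℝ (fun q : ℝ × ℝ => f q.1 q.2) p (1, 0) := by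
    funext p; exact px_eq hf p.1 p.2
  rw [Sm, hfe]; exact smooth_fderiv_apply hf (1, 0)

lemma Sm.py {f : ℝ → ℝ → ℝ} (hf : Sm f) : Sm (DTaux.py f) := by
  have hfe : (fun p : ℝ × ℝ => DTaux.py f p.1 p.2)
      = fun p : ℝ × ℝ => fderiv ℝ (fun q : ℝ × ℝ => f q.1 q.2) p (0, 1) := by
    funext p; exact py_eq hf p.1 p.2
  rw [Sm, hfe]; exact smooth_fderiv_apply hf (0, 1)


lemma clairaut {f : ℝ → ℝ → ℝ} (hf : Sm f) (x y : ℝ) :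
    py (px f) x y = px (py f) x y := by
  set F : ℝ × ℝ → ℝ := fun p => f p.1 p.2 with hF
  have hsym : IsSymmSndFDerivAt ℝ F (x, y) :=
    hf.contDiffAt.isSymmSndFDerivAt
      (by rw [minSmoothness_of_isRCLikeNormedField]
          exact WithTop.coe_le_coe.mpr le_top)
  have key : ∀ w w' : ℝ × ℝ,
      fderiv ℝ (fun p : ℝ × ℝ => fderiv ℝ F p w) (x, y) w'
        = fderiv ℝ (fderiv ℝ F) (x, y) w' w := by
    intro w w'
    have hC : ContDiff ℝ ((⊤:ℕ∞)) (fderiv ℝ F) :=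
      hf.fderiv_right (le_of_eq (by norm_num))
    have hd : DifferentiableAt ℝ (fderiv ℝ F) (x, y) :=
      (hC.differentiable (by simp)) (x, y)
    have : fderiv ℝ (fun p : ℝ × ℝ => fderiv ℝ F p w) (x, y)
        = (fderiv ℝ (fderiv ℝ F) (x, y)).flip w := by
      have h0 := fderiv_clm_apply (c := fderiv ℝ F) (u := fun _ : ℝ × ℝ => w) hd
        (differentiableAt_const w)
      rw [h0]; simp
    rw [this]; rfl
  -- py (px f) x y
  have h1 : py (px f) x y = fderiv ℝ (fderiv ℝ F) (x, y) (0, 1) (1, 0) := by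
    rw [py_eq hf.px x y]
    have hx : (fun p : ℝ × ℝ => px f p.1 p.2)
        = fun p : ℝ × ℝ => fderiv ℝ F p (1, 0) := by
      funext p; exact px_eq hf p.1 p.2
    rw [hx, key]
  have h2 : px (py f) x y = fderiv ℝ (fderiv ℝ F) (x, y) (1, 0) (0, 1) := by
    rw [px_eq hf.py x y]
    have hy : (fun p : ℝ × ℝ => py f p.1 p.2)
        = fun p : ℝ × ℝ => fderiv ℝ F p (0, 1) := by
      funext p; exact py_eq hf p.1 p.2
    rw [hy, key]
  rw [h1, h2, hsym.eq]

lemma sm_iter_px {f : ℝ → ℝ → ℝ} (hf : Sm f) (m : ℕ) : Sm (px^[m] f) := by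
  induction m with
  | zero => exact hf
  | succ m ih => rw [Function.iterate_succ_apply']; exact ih.px

lemma py_px_iter {f : ℝ → ℝ → ℝ} (hf : Sm f) (m : ℕ) :
    py (px^[m] f) = px^[m] (py f) := by
  induction m generalizing f with
  | zero => rfl
  | succ m ih =>
    rw [Function.iterate_succ_apply, Function.iterate_succ_apply, ih hf.px]
    congr 1
    funext x y
    exact (clairaut hf x y)

/-- slice representation of iterated x-derivatives -/
lemma iter_sliceX (f : ℝ → ℝ → ℝ) (m : ℕ) (x y : ℝ) :
    iteratedDeriv m (fun x' => f x' y) x = px^[m] f x y := by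
  induction m generalizing f with
  | zero => simp
  | succ m ih =>
    rw [iteratedDeriv_succ']
    have : deriv (fun x' => f x' y) = fun x' => px f x' y := rfl
    rw [this, ih (px f), Function.iterate_succ_apply]

lemma iter_sliceY (f : ℝ → ℝ → ℝ) (n : ℕ) (x y : ℝ) :
    iteratedDeriv n (fun y' => f x y') y = py^[n] f x y := by
  induction n generalizing f with
  | zero => simp
  | succ n ih =>
    rw [iteratedDeriv_succ']
    have : deriv (fun y' => f x y') = fun y' => py f x y' := rfl
    rw [this, ih (py f), Function.iterate_succ_apply]

/-- mixed derivative -/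
noncomputable def D (f : ℝ → ℝ → ℝ) (m n : ℕ) : ℝ :=
  iteratedDeriv n (fun y => iteratedDeriv m (fun x => f x y) 0) 0

lemma D_eq (f : ℝ → ℝ → ℝ) (m n : ℕ) : D f m n = py^[n] (px^[m] f) 0 0 := by
  unfold D
  have : (fun y => iteratedDeriv m (fun x => f x y) 0) = fun y => px^[m] f 0 y := by
    funext y; exact iter_sliceX f m 0 y
  rw [this, iter_sliceY]

lemma D_px (f : ℝ → ℝ → ℝ) (m n : ℕ) : D (px f) m n = D f (m + 1) n := by
  rw [D_eq, D_eq, Function.iterate_succ_apply]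

lemma D_py {f : ℝ → ℝ → ℝ} (hf : Sm f) (m n : ℕ) : D (py f) m n = D f m (n + 1) := by
  rw [D_eq, D_eq, Function.iterate_succ_apply, ← py_px_iter hf m]


lemma smooth_iteratedDeriv {f : ℝ → ℝ} (hf : ContDiff ℝ (⊤:ℕ∞) f) (k : ℕ) :
    ContDiff ℝ (⊤:ℕ∞) (iteratedDeriv k f) := by
  rw [iteratedDeriv_eq_iterate]
  exact ContDiff.iterate_deriv k hf

lemma pascal_sum (A B : ℕ → ℝ) (n : ℕ) :
    ∑ k ∈ Finset.range (n+1), (n.choose k : ℝ) * (A (k+1) * B (n-k) + A k * B (n+1-k))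
      = ∑ k ∈ Finset.range (n+2), ((n+1).choose k : ℝ) * (A k * B (n+1-k)) := by
  rw [Finset.sum_range_succ' (fun k => ((n+1).choose k : ℝ) * (A k * B (n+1-k))) (n+1)]
  have hS2 : ∑ k ∈ Finset.range (n+1), (n.choose k : ℝ) * (A k * B (n+1-k))
      = (∑ i ∈ Finset.range (n+1), (n.choose (i+1) : ℝ) * (A (i+1) * B (n-i)))
        + A 0 * B (n+1) := by
    rw [Finset.sum_range_succ' (fun k => (n.choose k : ℝ) * (A k * B (n+1-k))) n,
      Finset.sum_range_succ (fun i => (n.choose (i+1) : ℝ) * (A (i+1) * B (n-i))) n]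
    simp [Nat.choose_succ_self, Nat.succ_sub_succ]
  simp only [mul_add, Finset.sum_add_distrib, hS2]
  rw [← add_assoc, ← Finset.sum_add_distrib]
  congr 1
  · refine Finset.sum_congr rfl fun i _ => ?_
    rw [Nat.succ_sub_succ, Nat.choose_succ_succ, Nat.cast_add]
    ring
  · simp

lemma leibniz {f g : ℝ → ℝ} (hf : ContDiff ℝ (⊤:ℕ∞) f) (hg : ContDiff ℝ (⊤:ℕ∞) g) (n : ℕ) :
    iteratedDeriv n (fun t => f t * g t) = fun x =>
      ∑ k ∈ Finset.range (n+1),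
        (n.choose k : ℝ) * (iteratedDeriv k f x * iteratedDeriv (n-k) g x) := by
  induction n with
  | zero => simp
  | succ n ih =>
    rw [iteratedDeriv_succ, ih]
    funext x
    have hdA : ∀ k x', DifferentiableAt ℝ (iteratedDeriv k f) x' := fun k x' =>
      ((smooth_iteratedDeriv hf k).differentiable (by simp)) x'
    have hdB : ∀ k x', DifferentiableAt ℝ (iteratedDeriv k g) x' := fun k x' =>
      ((smooth_iteratedDeriv hg k).differentiable (by simp)) x'
    rw [deriv_fun_sum (fun k _ => by
      exact (((hdA k x).mul (hdB (n-k) x)).const_mul _))]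
    have : ∀ k ∈ Finset.range (n+1),
        deriv (fun x => (n.choose k : ℝ) * (iteratedDeriv k f x * iteratedDeriv (n-k) g x)) x
          = (n.choose k : ℝ) * (iteratedDeriv (k+1) f x * iteratedDeriv (n-k) g x
              + iteratedDeriv k f x * iteratedDeriv (n+1-k) g x) := by
      intro k hk
      rw [deriv_const_mul _ ((hdA k x).fun_mul (hdB (n-k) x)),
        deriv_fun_mul (hdA k x) (hdB (n-k) x)]
      rw [Finset.mem_range] at hk
      have hnk : n + 1 - k = (n - k) + 1 := by omega
      rw [← iteratedDeriv_succ, ← iteratedDeriv_succ, hnk]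
    rw [Finset.sum_congr rfl this]
    exact pascal_sum (fun k => iteratedDeriv k f x) (fun k => iteratedDeriv k g x) n


lemma iteratedDeriv_csum {ι : Type*} (s : Finset ι) (F : ι → ℝ → ℝ)
    (hF : ∀ i ∈ s, ContDiff ℝ (⊤:ℕ∞) (F i)) (n : ℕ) (x : ℝ) :
    iteratedDeriv n (fun y => ∑ i ∈ s, F i y) x = ∑ i ∈ s, iteratedDeriv n (F i) x := by
  induction n generalizing F with
  | zero => simp
  | succ n ih =>
    rw [iteratedDeriv_succ']
    have hder : deriv (fun y => ∑ i ∈ s, F i y) = fun y => ∑ i ∈ s, deriv (F i) y := by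
      funext y
      exact deriv_fun_sum fun i hi => ((hF i hi).differentiable (by simp)) y
    rw [hder, ih (fun i => deriv (F i))
      (fun i hi => (contDiff_infty_iff_deriv.mp (hF i hi)).2)]
    exact Finset.sum_congr rfl fun i _ => by rw [iteratedDeriv_succ']

lemma iteratedDeriv_cmul {F : ℝ → ℝ} (hF : ContDiff ℝ (⊤:ℕ∞) F) (c : ℝ) (n : ℕ) (x : ℝ) :
    iteratedDeriv n (fun y => c * F y) x = c * iteratedDeriv n F x := by
  induction n generalizing F with
  | zero => simp
  | succ n ih =>
    rw [iteratedDeriv_succ', iteratedDeriv_succ']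
    have hder : deriv (fun y => c * F y) = fun y => c * deriv F y := by
      funext y
      exact deriv_const_mul c ((hF.differentiable (by simp)) y)
    rw [hder, ih (contDiff_infty_iff_deriv.mp hF).2]

lemma D_mul {f g : ℝ → ℝ → ℝ} (hf : Sm f) (hg : Sm g) (m n : ℕ) :
    D (fun x y => f x y * g x y) m n
      = ∑ k ∈ Finset.range (m+1), ∑ l ∈ Finset.range (n+1),
          (m.choose k : ℝ) * (n.choose l : ℝ) * D f k l * D g (m-k) (n-l) := by
  have hinner : (fun y => iteratedDeriv m (fun x => f x y * g x y) 0)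
      = fun y => ∑ k ∈ Finset.range (m+1),
          (m.choose k : ℝ) * (px^[k] f 0 y * px^[m-k] g 0 y) := by
    funext y
    rw [leibniz (hf.sliceX y) (hg.sliceX y) m]
    exact Finset.sum_congr rfl fun k _ => by rw [iter_sliceX, iter_sliceX]
  conv_lhs => rw [D, hinner]
  have hA : ∀ k : ℕ, ContDiff ℝ (⊤:ℕ∞) (fun y => px^[k] f 0 y) := fun k =>
    (sm_iter_px hf k).sliceY 0
  have hB : ∀ k : ℕ, ContDiff ℝ (⊤:ℕ∞) (fun y => px^[k] g 0 y) := fun k =>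
    (sm_iter_px hg k).sliceY 0
  rw [iteratedDeriv_csum _ _ (fun k _ => contDiff_const.mul ((hA k).mul (hB (m-k)))) n 0]
  refine Finset.sum_congr rfl fun k _ => ?_
  rw [iteratedDeriv_cmul ((hA k).mul (hB (m-k))) _ n 0]
  rw [show (fun y => px^[k] f 0 y * px^[m-k] g 0 y)
      = fun y => (fun y => px^[k] f 0 y) y * (fun y => px^[m-k] g 0 y) y from rfl]
  rw [leibniz (hA k) (hB (m-k)) n]
  rw [Finset.mul_sum]
  refine Finset.sum_congr rfl fun l _ => ?_
  rw [iter_sliceY, iter_sliceY, D_eq, D_eq]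
  ring


lemma D_cmul {f : ℝ → ℝ → ℝ} (hf : Sm f) (c : ℝ) (m n : ℕ) :
    D (fun x y => c * f x y) m n = c * D f m n := by
  have hinner : (fun y => iteratedDeriv m (fun x => c * f x y) 0)
      = fun y => c * px^[m] f 0 y := by
    funext y
    rw [show (fun x => c * f x y) = (fun x => c * (fun x' => f x' y) x) from rfl,
      iteratedDeriv_cmul (hf.sliceX y) c m 0, iter_sliceX]
  rw [D, hinner, iteratedDeriv_cmul ((sm_iter_px hf m).sliceY 0) c n 0, D_eq, iter_sliceY]

lemma pde_x {a : ℝ} {u v : ℝ → ℝ → ℝ} (hv : Sm v)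
    (h : ∀ x y : ℝ, u x y = Real.exp (a * v x y)) (x y : ℝ) :
    px u x y = a * (px v x y * u x y) := by
  have hw : HasDerivAt (fun x' => v x' y) (px v x y) x :=
    (((hv.sliceX y).differentiable (by simp)) x).hasDerivAt
  have hu' : HasDerivAt (fun x' => u x' y)
      (Real.exp (a * v x y) * (a * px v x y)) x := by
    have : (fun x' => u x' y) = fun x' => Real.exp (a * v x' y) := by
      funext x'; exact h x' y
    rw [this]
    exact (hw.const_mul a).exp
  rw [show px u x y = deriv (fun x' => u x' y) x from rfl, hu'.deriv, ← h x y]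
  ring

lemma pde_y {a : ℝ} {u v : ℝ → ℝ → ℝ} (hv : Sm v)
    (h : ∀ x y : ℝ, u x y = Real.exp (a * v x y)) (x y : ℝ) :
    py u x y = a * (py v x y * u x y) := by
  have hw : HasDerivAt (fun y' => v x y') (py v x y) y :=
    (((hv.sliceY x).differentiable (by simp)) y).hasDerivAt
  have hu' : HasDerivAt (fun y' => u x y')
      (Real.exp (a * v x y) * (a * py v x y)) y := by
    have : (fun y' => u x y') = fun y' => Real.exp (a * v x y') := by
      funext y'; exact h x y'
    rw [this]
    exact (hw.const_mul a).exp
  rw [show py u x y = deriv (fun y' => u x y') y from rfl, hu'.deriv, ← h x y]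
  ring

lemma coeff1 {M k l n : ℕ} (hk : k ≤ M) (hl : l ≤ n) :
    (1 / (((M+1).factorial * n.factorial : ℕ) : ℝ)) * (M.choose k) * (n.choose l)
      = (((k+1 : ℕ)) : ℝ) / ((M+1 : ℕ) : ℝ)
        * (1 / (((k+1).factorial * l.factorial : ℕ) : ℝ))
        * (1 / ((((M-k).factorial) * (n-l).factorial : ℕ) : ℝ)) := by
  rw [Nat.cast_choose ℝ hk, Nat.cast_choose ℝ hl]
  have e1 : ((M+1).factorial : ℝ) = (M+1) * M.factorial := by
    exact_mod_cast Nat.factorial_succ M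
  have e2 : ((k+1).factorial : ℝ) = (k+1) * k.factorial := by
    exact_mod_cast Nat.factorial_succ k
  have p : ∀ j : ℕ, ((j.factorial : ℝ)) ≠ 0 := fun j => by
    exact_mod_cast (Nat.factorial_pos j).ne'
  push_cast [e1, e2]
  have hM1 : ((M : ℝ) + 1) ≠ 0 := by positivity
  have hk1 : ((k : ℝ) + 1) ≠ 0 := by positivity
  field_simp


lemma Sm.mul {f g : ℝ → ℝ → ℝ} (hf : Sm f) (hg : Sm g) :
    Sm (fun x y => f x y * g x y) :=
  ContDiff.mul hf hg

lemma DT_eq (f : ℝ → ℝ → ℝ) (m n : ℕ) :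
    diffTransform f m n = 1 / ((m.factorial : ℝ) * (n.factorial : ℝ)) * D f m n := rfl

end DTaux

open DTaux Finset

theorem stmt_4 (a : ℝ) (u v : ℝ → ℝ → ℝ)
    (hu : ContDiff ℝ (⊤ : ℕ∞) fun p : ℝ × ℝ => u p.1 p.2)
    (hv : ContDiff ℝ (⊤ : ℕ∞) fun p : ℝ × ℝ => v p.1 p.2)
    (h : ∀ x y : ℝ, u x y = Real.exp (a * v x y)) :
    diffTransform u 0 0 = Real.exp (a * v 0 0) ∧
    (∀ m n : ℕ, 1 ≤ m →
      diffTransform u m n = a *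
        ∑ k ∈ Finset.range m, ∑ l ∈ Finset.range (n + 1),
          (((m - k : ℕ) : ℝ) / (m : ℝ)) * diffTransform v (m - k) l *
            diffTransform u k (n - l)) ∧
    (∀ m n : ℕ, 1 ≤ n →
      diffTransform u m n = a *
        ∑ k ∈ Finset.range (m + 1), ∑ l ∈ Finset.range n,
          (((n - l : ℕ) : ℝ) / (n : ℝ)) * diffTransform v k (n - l) *
            diffTransform u (m - k) l) := by
  have hu' : Sm u := hu.of_le (by simp)
  have hv' : Sm v := hv.of_le (by simp)
  refine ⟨by simp [diffTransform, h], ?_, ?_⟩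
  · -- x-direction recurrence
    intro m n hm
    obtain ⟨M, rfl⟩ : ∃ M, m = M + 1 := ⟨m - 1, by omega⟩
    have hpxu : DTaux.px u = fun x y => a * (DTaux.px v x y * u x y) :=
      funext fun x => funext fun y => pde_x hv' h x y
    have hD : D u (M+1) n = a * ∑ k ∈ range (M+1), ∑ l ∈ range (n+1),
        (M.choose k : ℝ) * (n.choose l : ℝ) * D v (k+1) l * D u (M-k) (n-l) := by
      rw [← D_px u M n, hpxu, D_cmul (hv'.px.mul hu'), D_mul hv'.px hu' M n]
      congr 1
      refine sum_congr rfl fun k _ => sum_congr rfl fun l _ => ?_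
      rw [D_px]
    rw [DT_eq, hD, mul_left_comm]
    congr 1
    rw [← Finset.sum_range_reflect
      (fun k => ∑ l ∈ range (n+1),
        ((((M+1) - k : ℕ) : ℝ) / ((M+1 : ℕ) : ℝ)) * diffTransform v ((M+1) - k) l *
          diffTransform u k (n - l)) (M+1)]
    simp only [Finset.mul_sum]
    refine sum_congr rfl fun k hk => sum_congr rfl fun l hl => ?_
    rw [mem_range] at hk hl
    have hkM : k ≤ M := by omega
    have hln : l ≤ n := by omega
    have e1 : M + 1 - 1 - k = M - k := by omega
    have e2 : M + 1 - (M - k) = k + 1 := by omega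
    rw [e1, e2, DT_eq, DT_eq]
    have hc := coeff1 (n := n) hkM hln
    push_cast at hc ⊢
    linear_combination (D v (k+1) l * D u (M-k) (n-l)) * hc
  · -- y-direction recurrence
    intro m n hn
    obtain ⟨N, rfl⟩ : ∃ N, n = N + 1 := ⟨n - 1, by omega⟩
    have hpyu : DTaux.py u = fun x y => a * (DTaux.py v x y * u x y) :=
      funext fun x => funext fun y => pde_y hv' h x y
    have hD : D u m (N+1) = a * ∑ k ∈ range (m+1), ∑ l ∈ range (N+1),
        (m.choose k : ℝ) * (N.choose l : ℝ) * D v k (l+1) * D u (m-k) (N-l) := by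
      rw [← D_py hu' m N, hpyu, D_cmul (hv'.py.mul hu'), D_mul hv'.py hu' m N]
      congr 1
      refine sum_congr rfl fun k _ => sum_congr rfl fun l _ => ?_
      rw [D_py hv']
    rw [DT_eq, hD, mul_left_comm]
    congr 1
    have hrefl : ∀ k : ℕ,
        (∑ l ∈ range (N+1),
          ((((N+1) - l : ℕ) : ℝ) / ((N+1 : ℕ) : ℝ)) * diffTransform v k ((N+1) - l) *
            diffTransform u (m - k) l)
        = ∑ l ∈ range (N+1),
          ((((N+1) - (N-l) : ℕ) : ℝ) / ((N+1 : ℕ) : ℝ)) * diffTransform v k ((N+1) - (N-l)) *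
            diffTransform u (m - k) (N-l) := by
      intro k
      rw [← Finset.sum_range_reflect]
      refine sum_congr rfl fun l hl => ?_
      have : N + 1 - 1 - l = N - l := by omega
      rw [this]
    simp only [hrefl, Finset.mul_sum]
    refine sum_congr rfl fun k hk => sum_congr rfl fun l hl => ?_
    rw [mem_range] at hk hl
    have hkm : k ≤ m := by omega
    have hlN : l ≤ N := by omega
    have e2 : N + 1 - (N - l) = l + 1 := by omega
    rw [e2, DT_eq, DT_eq]
    have hc := coeff1 (n := m) hlN hkm
    push_cast at hc ⊢
    linear_combination (D v k (l+1) * D u (m-k) (N-l)) * hc
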